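/- Assume that for each i ∈ I and every v ∈ ℝ^d, ‖∇l_{Sᵢ}(v) − ∇l_{Tᵢ}(v)‖ ≤ bᵢ, and set b = ∫_I bᵢ dμ(i). Define C_b = C_𝓛 = (αρ + (ρ/L)(1 + αL)^{N−1})(1 + αL)^{2N}, and the meta objective gradient ∇𝓛(w) = ∫_I Gᵢ(w) dμ(i). Then for every w, u ∈ ℝ^d, ‖∇𝓛(w) − ∇𝓛(u)‖ ≤ ((1 + αL)^{2N} L + C_b b + C_𝓛 ∫_I ‖∇l_{Tᵢ}(w)‖ dμ(i)) ‖w − u‖. -/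

import Mathlib

/-!
Write `M = 1 + αL`. One gradient step `v ↦ v - α∇l_S v` is `M`-Lipschitz and has derivative
`I - α∇²l_S v` of norm at most `M`, so the inner path is `M^j`-Lipschitz in `w` and the Hessian
product `P_N(w)` has norm at most `M^N`. Splitting `P_{N+1}(w) - P_{N+1}(u)` at its last factor
gives a recursion whose solution is `‖P_{N+1}(w) - P_{N+1}(u)‖ ≤ (ρ/L) M^N (M^{N+1} - 1) ‖w - u‖`.
Since `‖∇l_S - ∇l_T‖ ≤ b`, each step multiplies `‖∇l_T‖` along the path by at most `M` up to an
additive `αLb`. Writing `G(w) - G(u) = (P_N(w) - P_N(u)) x + P_N(u)(x - y)` with `x`, `y` the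
target gradients at the ends of the two paths gives a per-task bound that is affine in `b_i` and
`‖∇l_{T_i}(w)‖`; integrating it over the tasks gives the theorem.
-/

open MeasureTheory

noncomputable def innerPath {d : ℕ} (α : ℝ) (l : EuclideanSpace ℝ (Fin d) → ℝ) :
    ℕ → EuclideanSpace ℝ (Fin d) → EuclideanSpace ℝ (Fin d)
  | 0, w => w
  | j + 1, w => innerPath α l j w - α • gradient l (innerPath α l j w)

noncomputable def hessProd {d : ℕ} (α : ℝ) (N : ℕ)
    (lS : EuclideanSpace ℝ (Fin d) → ℝ) (w : EuclideanSpace ℝ (Fin d)) :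
    EuclideanSpace ℝ (Fin d) →L[ℝ] EuclideanSpace ℝ (Fin d) :=
  ((List.range N).map fun j =>
    ContinuousLinearMap.id ℝ (EuclideanSpace ℝ (Fin d)) -
      α • fderiv ℝ (gradient lS) (innerPath α lS j w)).prod

noncomputable def metaGrad {d : ℕ} (α : ℝ) (N : ℕ)
    (lS lT : EuclideanSpace ℝ (Fin d) → ℝ) (w : EuclideanSpace ℝ (Fin d)) :
    EuclideanSpace ℝ (Fin d) :=
  hessProd α N lS w (gradient lT (innerPath α lS N w))

section GradientStep

variable {E : Type*} [NormedAddCommGroup E] [NormedSpace ℝ E] {α L ρ b : ℝ} {F G : E → E}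

noncomputable def gradStepDeriv (α : ℝ) (F : E → E) (v : E) : E →L[ℝ] E :=
  ContinuousLinearMap.id ℝ E - α • fderiv ℝ F v

lemma norm_gradStep_sub_le (hα : 0 ≤ α) (hF : ∀ v w : E, ‖F v - F w‖ ≤ L * ‖v - w‖) (v w : E) :
    ‖(v - α • F v) - (w - α • F w)‖ ≤ (1 + α * L) * ‖v - w‖ := by
  have hstep : (v - α • F v) - (w - α • F w) = (v - w) - α • (F v - F w) := by
    rw [smul_sub]; abel
  calc ‖(v - α • F v) - (w - α • F w)‖ ≤ ‖v - w‖ + α * ‖F v - F w‖ := by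
        rw [hstep]; exact (norm_sub_le _ _).trans_eq (by rw [norm_smul, Real.norm_of_nonneg hα])
    _ ≤ ‖v - w‖ + α * (L * ‖v - w‖) := by gcongr; exact hF v w
    _ = (1 + α * L) * ‖v - w‖ := by ring

lemma norm_comp_gradStep_le (hα : 0 ≤ α) (hL : 0 ≤ L) (hG : ∀ v w : E, ‖G v - G w‖ ≤ L * ‖v - w‖)
    (hFG : ∀ v : E, ‖F v - G v‖ ≤ b) (v : E) :
    ‖G (v - α • F v)‖ ≤ (1 + α * L) * ‖G v‖ + α * L * b := by
  have hF : ‖F v‖ ≤ ‖G v‖ + b := by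
    linarith [norm_le_norm_add_norm_sub' (F v) (G v), hFG v]
  calc ‖G (v - α • F v)‖ ≤ ‖G v‖ + L * ‖(v - α • F v) - v‖ := by
        linarith [norm_le_norm_add_norm_sub' (G (v - α • F v)) (G v), hG (v - α • F v) v]
    _ = ‖G v‖ + L * (α * ‖F v‖) := by
        rw [sub_sub_cancel_left, norm_neg, norm_smul, Real.norm_of_nonneg hα]
    _ ≤ ‖G v‖ + L * (α * (‖G v‖ + b)) := by gcongr
    _ = (1 + α * L) * ‖G v‖ + α * L * b := by ring

lemma norm_gradStepDeriv_le (hα : 0 ≤ α) (hL : 0 ≤ L)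
    (hF : ∀ v w : E, ‖F v - F w‖ ≤ L * ‖v - w‖) (v : E) :
    ‖gradStepDeriv α F v‖ ≤ 1 + α * L := by
  have hDF : ‖fderiv ℝ F v‖ ≤ L :=
    norm_fderiv_le_of_lip' ℝ hL (Filter.Eventually.of_forall fun w => hF w v)
  calc ‖gradStepDeriv α F v‖ ≤ ‖ContinuousLinearMap.id ℝ E‖ + α * ‖fderiv ℝ F v‖ :=
        (norm_sub_le _ _).trans_eq (by rw [norm_smul, Real.norm_of_nonneg hα])
    _ ≤ 1 + α * L := by gcongr; exact ContinuousLinearMap.norm_id_le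

lemma norm_gradStepDeriv_sub_le (hα : 0 ≤ α)
    (hDF : ∀ v w : E, ‖fderiv ℝ F v - fderiv ℝ F w‖ ≤ ρ * ‖v - w‖) (v w : E) :
    ‖gradStepDeriv α F v - gradStepDeriv α F w‖ ≤ α * ρ * ‖v - w‖ := by
  have hdiff : gradStepDeriv α F v - gradStepDeriv α F w =
      -(α • (fderiv ℝ F v - fderiv ℝ F w)) := by
    simp only [gradStepDeriv, smul_sub]; abel
  rw [hdiff, norm_neg, norm_smul, Real.norm_of_nonneg hα, mul_assoc]
  exact mul_le_mul_of_nonneg_left (hDF v w) hα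

end GradientStep

section InnerPath

variable {d : ℕ} {α L b : ℝ} {lS lT : EuclideanSpace ℝ (Fin d) → ℝ}

lemma norm_innerPath_sub_le (hα : 0 ≤ α) (hL : 0 ≤ L)
    (hgradS : ∀ w u, ‖gradient lS w - gradient lS u‖ ≤ L * ‖w - u‖)
    (w u : EuclideanSpace ℝ (Fin d)) :
    ∀ j, ‖innerPath α lS j w - innerPath α lS j u‖ ≤ (1 + α * L) ^ j * ‖w - u‖
  | 0 => by simp [innerPath]
  | j + 1 => calc
      ‖innerPath α lS (j + 1) w - innerPath α lS (j + 1) u‖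
          ≤ (1 + α * L) * ‖innerPath α lS j w - innerPath α lS j u‖ :=
        norm_gradStep_sub_le hα hgradS _ _
      _ ≤ (1 + α * L) * ((1 + α * L) ^ j * ‖w - u‖) := by
        gcongr; exact norm_innerPath_sub_le hα hL hgradS w u j
      _ = (1 + α * L) ^ (j + 1) * ‖w - u‖ := by ring

lemma norm_gradient_innerPath_le (hα : 0 ≤ α) (hL : 0 ≤ L)
    (hgradT : ∀ w u, ‖gradient lT w - gradient lT u‖ ≤ L * ‖w - u‖)
    (hdiff : ∀ v, ‖gradient lS v - gradient lT v‖ ≤ b) (w : EuclideanSpace ℝ (Fin d)) :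
    ∀ j, ‖gradient lT (innerPath α lS j w)‖ ≤
      (1 + α * L) ^ j * ‖gradient lT w‖ + ((1 + α * L) ^ j - 1) * b
  | 0 => by simp [innerPath]
  | j + 1 => calc
      ‖gradient lT (innerPath α lS (j + 1) w)‖
          ≤ (1 + α * L) * ‖gradient lT (innerPath α lS j w)‖ + α * L * b :=
        norm_comp_gradStep_le hα hL hgradT hdiff _
      _ ≤ (1 + α * L) * ((1 + α * L) ^ j * ‖gradient lT w‖ + ((1 + α * L) ^ j - 1) * b)
          + α * L * b := by
        gcongr; exact norm_gradient_innerPath_le hα hL hgradT hdiff w j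
      _ = (1 + α * L) ^ (j + 1) * ‖gradient lT w‖ + ((1 + α * L) ^ (j + 1) - 1) * b := by ring

end InnerPath

section HessProd

variable {d : ℕ} {α L ρ : ℝ} {lS : EuclideanSpace ℝ (Fin d) → ℝ}

lemma hessProd_zero (w : EuclideanSpace ℝ (Fin d)) : hessProd α 0 lS w = 1 := rfl

lemma hessProd_succ (N : ℕ) (w : EuclideanSpace ℝ (Fin d)) :
    hessProd α (N + 1) lS w =
      hessProd α N lS w * gradStepDeriv α (gradient lS) (innerPath α lS N w) := by
  rw [hessProd, List.range_succ, List.map_append, List.prod_append]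
  simp [hessProd, gradStepDeriv]

lemma norm_hessProd_le (hα : 0 ≤ α) (hL : 0 ≤ L)
    (hgradS : ∀ w u, ‖gradient lS w - gradient lS u‖ ≤ L * ‖w - u‖) (w : EuclideanSpace ℝ (Fin d)) :
    ∀ N, ‖hessProd α N lS w‖ ≤ (1 + α * L) ^ N
  | 0 => by rw [hessProd_zero, pow_zero]; exact ContinuousLinearMap.norm_id_le
  | N + 1 => by
    rw [hessProd_succ, pow_succ]
    exact (norm_mul_le _ _).trans <| mul_le_mul (norm_hessProd_le hα hL hgradS w N)
      (norm_gradStepDeriv_le hα hL hgradS _) (norm_nonneg _) (by positivity)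

/-- With `M = 1 + αL`, the `j`-th factor moves by at most `αρ M^j ‖w - u‖`, and the recursion
`D_{N+1} ≤ M^{N+1} · αρ M^{N+1} + M D_N` is solved by this closed form since `αρ = (ρ/L)(M - 1)`. -/
lemma norm_hessProd_succ_sub_le (hα : 0 ≤ α) (hL : 0 < L) (hρ : 0 ≤ ρ)
    (hgradS : ∀ w u, ‖gradient lS w - gradient lS u‖ ≤ L * ‖w - u‖)
    (hhessS : ∀ w u, ‖fderiv ℝ (gradient lS) w - fderiv ℝ (gradient lS) u‖ ≤ ρ * ‖w - u‖)
    (w u : EuclideanSpace ℝ (Fin d)) :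
    ∀ N, ‖hessProd α (N + 1) lS w - hessProd α (N + 1) lS u‖ ≤
      ρ / L * (1 + α * L) ^ N * ((1 + α * L) ^ (N + 1) - 1) * ‖w - u‖ := by
  have hfactor : ∀ j, ‖gradStepDeriv α (gradient lS) (innerPath α lS j w) -
      gradStepDeriv α (gradient lS) (innerPath α lS j u)‖ ≤ α * ρ * ((1 + α * L) ^ j * ‖w - u‖) :=
    fun j => (norm_gradStepDeriv_sub_le hα hhessS _ _).trans <| by
      gcongr; exact norm_innerPath_sub_le hα hL.le hgradS w u j
  have hαρ : α * ρ = ρ / L * (1 + α * L - 1) := by field_simp; ring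
  intro N
  induction N with
  | zero =>
    simp only [hessProd_succ, hessProd_zero, one_mul]
    refine (hfactor 0).trans_eq ?_
    rw [hαρ]; ring
  | succ N ih =>
    set M := 1 + α * L
    have hsplit : ∀ a b c e : EuclideanSpace ℝ (Fin d) →L[ℝ] EuclideanSpace ℝ (Fin d),
        a * b - c * e = a * (b - e) + (a - c) * e := fun a b c e => by
      rw [mul_sub, sub_mul]; abel
    rw [hessProd_succ _ w, hessProd_succ _ u, hsplit]
    calc _ ≤ M ^ (N + 1) * (α * ρ * (M ^ (N + 1) * ‖w - u‖)) +
          ρ / L * M ^ N * (M ^ (N + 1) - 1) * ‖w - u‖ * M := by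
          refine (norm_add_le _ _).trans (add_le_add ?_ ?_) <;> refine (norm_mul_le _ _).trans ?_
          · exact mul_le_mul (norm_hessProd_le hα hL.le hgradS w _) (hfactor _)
              (norm_nonneg _) (by positivity)
          · exact mul_le_mul ih (norm_gradStepDeriv_le hα hL.le hgradS _)
              (norm_nonneg _) ((norm_nonneg _).trans ih)
      _ = ρ / L * M ^ (N + 1) * (M ^ (N + 1 + 1) - 1) * ‖w - u‖ := by rw [hαρ]; ring

end HessProd

section MetaGrad

variable {d : ℕ} {α L ρ b : ℝ} {lS lT : EuclideanSpace ℝ (Fin d) → ℝ}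

lemma norm_metaGrad_sub_le (hα : 0 ≤ α) (hL : 0 < L) (hρ : 0 ≤ ρ)
    (hgradS : ∀ w u, ‖gradient lS w - gradient lS u‖ ≤ L * ‖w - u‖)
    (hgradT : ∀ w u, ‖gradient lT w - gradient lT u‖ ≤ L * ‖w - u‖)
    (hhessS : ∀ w u, ‖fderiv ℝ (gradient lS) w - fderiv ℝ (gradient lS) u‖ ≤ ρ * ‖w - u‖)
    (hdiff : ∀ v, ‖gradient lS v - gradient lT v‖ ≤ b) (N : ℕ) (w u : EuclideanSpace ℝ (Fin d)) :
    ‖metaGrad α (N + 1) lS lT w - metaGrad α (N + 1) lS lT u‖ ≤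
      ((1 + α * L) ^ (2 * (N + 1)) * L +
        ((α * ρ + ρ / L * (1 + α * L) ^ N) * (1 + α * L) ^ (2 * (N + 1))) * b +
        ((α * ρ + ρ / L * (1 + α * L) ^ N) * (1 + α * L) ^ (2 * (N + 1))) * ‖gradient lT w‖) *
        ‖w - u‖ := by
  set M := 1 + α * L
  set x := gradient lT (innerPath α lS (N + 1) w)
  set y := gradient lT (innerPath α lS (N + 1) u)
  have hsplit : metaGrad α (N + 1) lS lT w - metaGrad α (N + 1) lS lT u =
      (hessProd α (N + 1) lS w - hessProd α (N + 1) lS u) x + hessProd α (N + 1) lS u (x - y) := by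
    simp only [metaGrad, sub_apply, map_sub, x, y]; abel
  have hPdiff : ‖hessProd α (N + 1) lS w - hessProd α (N + 1) lS u‖ ≤
      ρ / L * M ^ N * M ^ (N + 1) * ‖w - u‖ :=
    (norm_hessProd_succ_sub_le hα hL hρ hgradS hhessS w u N).trans (by gcongr; linarith)
  have hx : ‖x‖ ≤ M ^ (N + 1) * (b + ‖gradient lT w‖) := by
    have hb : 0 ≤ b := (norm_nonneg _).trans (hdiff w)
    linarith [norm_gradient_innerPath_le hα hL.le hgradT hdiff w (N + 1)]
  have hxy : ‖x - y‖ ≤ L * (M ^ (N + 1) * ‖w - u‖) :=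
    (hgradT _ _).trans (by gcongr; exact norm_innerPath_sub_le hα hL.le hgradS w u _)
  have hPu := norm_hessProd_le hα hL.le hgradS u (N + 1)
  rw [hsplit]
  calc _ ≤ ‖hessProd α (N + 1) lS w - hessProd α (N + 1) lS u‖ * ‖x‖ +
          ‖hessProd α (N + 1) lS u‖ * ‖x - y‖ :=
        (norm_add_le _ _).trans (add_le_add (ContinuousLinearMap.le_opNorm _ _)
          (ContinuousLinearMap.le_opNorm _ _))
    _ ≤ (ρ / L * M ^ N * M ^ (N + 1) * ‖w - u‖) * (M ^ (N + 1) * (b + ‖gradient lT w‖)) +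
          M ^ (N + 1) * (L * (M ^ (N + 1) * ‖w - u‖)) := by gcongr
    _ = (M ^ (2 * (N + 1)) * L + ρ / L * M ^ N * M ^ (2 * (N + 1)) * b +
          ρ / L * M ^ N * M ^ (2 * (N + 1)) * ‖gradient lT w‖) * ‖w - u‖ := by ring
    _ ≤ _ := by
        have hb : 0 ≤ b := (norm_nonneg _).trans (hdiff w)
        gcongr <;> linarith [mul_nonneg hα hρ]

end MetaGrad

lemma norm_integral_sub_integral_le_of_affine {I E : Type*} [MeasurableSpace I]
    [NormedAddCommGroup E] [NormedSpace ℝ E] {μ : Measure I} [IsProbabilityMeasure μ]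
    {F G : I → E} {b g : I → ℝ} {A C r : ℝ} (hF : Integrable F μ) (hG : Integrable G μ)
    (hb : Integrable b μ) (hg : Integrable g μ)
    (h : ∀ i, ‖F i - G i‖ ≤ (A + C * b i + C * g i) * r) :
    ‖(∫ i, F i ∂μ) - ∫ i, G i ∂μ‖ ≤ (A + C * (∫ i, b i ∂μ) + C * ∫ i, g i ∂μ) * r := by
  have hAb : Integrable (fun i => A + C * b i) μ := (integrable_const A).add (hb.const_mul C)
  have hbound : Integrable (fun i => A + C * b i + C * g i) μ := hAb.add (hg.const_mul C)
  rw [← integral_sub hF hG]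
  refine (norm_integral_le_of_norm_le (hbound.mul_const r) (.of_forall h)).trans_eq ?_
  rw [integral_mul_const, integral_add hAb (hg.const_mul C),
    integral_add (integrable_const A) (hb.const_mul C), integral_const, integral_const_mul,
    integral_const_mul, probReal_univ, one_smul]

theorem stmt14_general {d : ℕ} (α L ρ : ℝ) (hα : 0 < α) (hL : 0 < L) (hρ : 0 < ρ)
    (N : ℕ) (hN : 1 ≤ N)
    {I : Type*} [MeasurableSpace I] (μ : Measure I) [IsProbabilityMeasure μ]
    (lS lT : I → EuclideanSpace ℝ (Fin d) → ℝ)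
    (hgradS : ∀ i, ∀ w u : EuclideanSpace ℝ (Fin d),
      ‖gradient (lS i) w - gradient (lS i) u‖ ≤ L * ‖w - u‖)
    (hgradT : ∀ i, ∀ w u : EuclideanSpace ℝ (Fin d),
      ‖gradient (lT i) w - gradient (lT i) u‖ ≤ L * ‖w - u‖)
    (hhessS : ∀ i, ∀ w u : EuclideanSpace ℝ (Fin d),
      ‖fderiv ℝ (gradient (lS i)) w - fderiv ℝ (gradient (lS i)) u‖ ≤ ρ * ‖w - u‖)
    (b : I → ℝ) (hbint : Integrable b μ)
    (hdiffb : ∀ i, ∀ v : EuclideanSpace ℝ (Fin d),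
      ‖gradient (lS i) v - gradient (lT i) v‖ ≤ b i)
    (hGint : ∀ w : EuclideanSpace ℝ (Fin d),
      Integrable (fun i => metaGrad α N (lS i) (lT i) w) μ)
    (hgTint : ∀ w : EuclideanSpace ℝ (Fin d),
      Integrable (fun i => ‖gradient (lT i) w‖) μ) :
    ∀ w u : EuclideanSpace ℝ (Fin d),
      ‖(∫ i, metaGrad α N (lS i) (lT i) w ∂μ) - ∫ i, metaGrad α N (lS i) (lT i) u ∂μ‖ ≤
        ((1 + α * L) ^ (2 * N) * L +
          ((α * ρ + (ρ / L) * (1 + α * L) ^ (N - 1)) * (1 + α * L) ^ (2 * N)) *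
            (∫ i, b i ∂μ) +
          ((α * ρ + (ρ / L) * (1 + α * L) ^ (N - 1)) * (1 + α * L) ^ (2 * N)) *
            ∫ i, ‖gradient (lT i) w‖ ∂μ) * ‖w - u‖ := by
  intro w u
  obtain ⟨K, rfl⟩ : ∃ K, N = K + 1 := ⟨N - 1, (Nat.succ_pred_eq_of_pos hN).symm⟩
  rw [Nat.add_sub_cancel]
  exact norm_integral_sub_integral_le_of_affine (hGint w) (hGint u) hbint (hgTint w) fun i =>
    norm_metaGrad_sub_le hα.le hL hρ.le (hgradS i) (hgradT i) (hhessS i) (hdiffb i) K w u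

theorem stmt14 {d : ℕ} (hd : 1 ≤ d) (α L ρ : ℝ) (hα : 0 < α) (hL : 0 < L) (hρ : 0 < ρ)
    (N : ℕ) (hN : 1 ≤ N)
    {I : Type*} [MeasurableSpace I] (μ : Measure I) [IsProbabilityMeasure μ]
    (lS lT : I → EuclideanSpace ℝ (Fin d) → ℝ)
    (hlS : ∀ i, ContDiff ℝ 2 (lS i)) (hlT : ∀ i, ContDiff ℝ 2 (lT i))
    (hgradS : ∀ i, ∀ w u : EuclideanSpace ℝ (Fin d),
      ‖gradient (lS i) w - gradient (lS i) u‖ ≤ L * ‖w - u‖)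
    (hgradT : ∀ i, ∀ w u : EuclideanSpace ℝ (Fin d),
      ‖gradient (lT i) w - gradient (lT i) u‖ ≤ L * ‖w - u‖)
    (hhessS : ∀ i, ∀ w u : EuclideanSpace ℝ (Fin d),
      ‖fderiv ℝ (gradient (lS i)) w - fderiv ℝ (gradient (lS i)) u‖ ≤ ρ * ‖w - u‖)
    (hhessT : ∀ i, ∀ w u : EuclideanSpace ℝ (Fin d),
      ‖fderiv ℝ (gradient (lT i)) w - fderiv ℝ (gradient (lT i)) u‖ ≤ ρ * ‖w - u‖)
    (b : I → ℝ) (hbnn : ∀ i, 0 ≤ b i) (hbint : Integrable b μ)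
    (hdiffb : ∀ i, ∀ v : EuclideanSpace ℝ (Fin d),
      ‖gradient (lS i) v - gradient (lT i) v‖ ≤ b i)
    (hGint : ∀ w : EuclideanSpace ℝ (Fin d),
      Integrable (fun i => metaGrad α N (lS i) (lT i) w) μ)
    (hgTint : ∀ w : EuclideanSpace ℝ (Fin d),
      Integrable (fun i => ‖gradient (lT i) w‖) μ) :
    ∀ w u : EuclideanSpace ℝ (Fin d),
      ‖(∫ i, metaGrad α N (lS i) (lT i) w ∂μ) - ∫ i, metaGrad α N (lS i) (lT i) u ∂μ‖ ≤
        ((1 + α * L) ^ (2 * N) * L +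
          ((α * ρ + (ρ / L) * (1 + α * L) ^ (N - 1)) * (1 + α * L) ^ (2 * N)) *
            (∫ i, b i ∂μ) +
          ((α * ρ + (ρ / L) * (1 + α * L) ^ (N - 1)) * (1 + α * L) ^ (2 * N)) *
            ∫ i, ‖gradient (lT i) w‖ ∂μ) * ‖w - u‖ :=
  stmt14_general α L ρ hα hL hρ N hN μ lS lT hgradS hgradT hhessS b hbint hdiffb hGint hgTint
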